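/- Let 𝔤₀ be a real Lie algebra with complexification 𝔤, and on 𝔤* define the complex bivector fields c(z) = Σ c_{ij}^k z_k ∂_{z_i} ∧ ∂_{z_j} and c̃(z) = Σ c_{ij}^k z̄_k ∂_{z_i} ∧ ∂_{z_j} (structure constants of a real basis of 𝔤₀). Then (c, c̃) is a complex Poisson pair: [c,c] = [c,c̃] = [c̃,c̃] = 0, and c̃ is invariant under the coadjoint action of a connected group G₀ with Lie algebra 𝔤₀. -/

import Mathlib

open Module

abbrev Cn (n : ℕ) := Fin n → ℂ

/-- Wirtinger derivative ∂f/∂z_r of a (ℝ-differentiable) function f : ℂⁿ → ℂ. -/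
noncomputable def wirt {n : ℕ} (f : Cn n → ℂ) (z : Cn n) (r : Fin n) : ℂ :=
  (1/2) * (fderiv ℝ f z (Pi.single r 1) - Complex.I * fderiv ℝ f z (Pi.single r Complex.I))

/-- Conjugate Wirtinger derivative ∂f/∂z̄_r. -/
noncomputable def wirtBar {n : ℕ} (f : Cn n → ℂ) (z : Cn n) (r : Fin n) : ℂ :=
  (1/2) * (fderiv ℝ f z (Pi.single r 1) + Complex.I * fderiv ℝ f z (Pi.single r Complex.I))

/-- Schouten bracket of two complex bivector fields of type (2,0) on ℂⁿ ≅ 𝔤*,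
given by their coefficients b^{ij}(z) (contraction indices are of z-type, so
only the ∂_{z_r}-derivatives of the coefficients occur):
[b₁,b₂]^{ijk} = ½ Σ_{cyclic ijk} Σ_r ( b₁^{ir} ∂_{z_r} b₂^{jk} + b₂^{ir} ∂_{z_r} b₁^{jk} ). -/
noncomputable def schoutenHol {n : ℕ} (b₁ b₂ : Cn n → Fin n → Fin n → ℂ)
    (z : Cn n) (i j k : Fin n) : ℂ :=
  (1/2) * ((∑ r, (b₁ z i r * wirt (fun w => b₂ w j k) z r
                  + b₂ z i r * wirt (fun w => b₁ w j k) z r))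
         + (∑ r, (b₁ z j r * wirt (fun w => b₂ w k i) z r
                  + b₂ z j r * wirt (fun w => b₁ w k i) z r))
         + (∑ r, (b₁ z k r * wirt (fun w => b₂ w i j) z r
                  + b₂ z k r * wirt (fun w => b₁ w i j) z r)))

/-! The coefficients of `c` are ℂ-linear in `z` and those of `c̃` are ℂ-antilinear, so
`∂_z c^{jk} = s_{jk}^r`, `∂_z c̃^{jk} = 0` and `∂_{z̄} c̃^{jk} = s_{jk}^r`. Hence `[c̃, c̃] = 0`
outright, while `[c, c]`, `[c, c̃]` and the Lie derivative of `c̃` along the generators of the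
coadjoint action (after using the antisymmetry of `s`) all reduce to the
Jacobi identity `Σ_r (s_{jk}^r s_{ir}^m + s_{ki}^r s_{jr}^m + s_{ij}^r s_{kr}^m) = 0`
contracted with `z` or `z̄`. -/

namespace Module.Basis

variable {R L ι : Type*} [CommRing R] [LieRing L] [LieAlgebra R L] (e : Basis ι R L)

theorem repr_lie_self_swap (i j k : ι) : e.repr ⁅e j, e i⁆ k = -e.repr ⁅e i, e j⁆ k := by
  rw [← lie_skew, map_neg, Finsupp.neg_apply]

theorem repr_lie_eq_sum [Fintype ι] (x y : L) (m : ι) :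
    e.repr ⁅x, y⁆ m = ∑ r, e.repr y r * e.repr ⁅x, e r⁆ m := by
  conv_lhs => rw [← e.sum_repr y]
  simp only [lie_sum, lie_smul, map_sum, map_smul, Finsupp.finsetSum_apply, Finsupp.smul_apply,
    smul_eq_mul]

theorem sum_repr_lie_jacobi [Fintype ι] (i j k m : ι) :
    ∑ r, (e.repr ⁅e j, e k⁆ r * e.repr ⁅e i, e r⁆ m + e.repr ⁅e k, e i⁆ r * e.repr ⁅e j, e r⁆ m
      + e.repr ⁅e i, e j⁆ r * e.repr ⁅e k, e r⁆ m) = 0 := by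
  simp only [Finset.sum_add_distrib, ← e.repr_lie_eq_sum, ← Finsupp.add_apply, ← map_add,
    lie_jacobi, map_zero, Finsupp.zero_apply]

end Module.Basis

section Wirtinger

variable {n : ℕ} (c : Fin n → ℂ) (z : Cn n) (r : Fin n)

theorem fderiv_sum_mul :
    fderiv ℝ (fun w : Cn n => ∑ k, c k * w k) z
      = (∑ k, c k • ContinuousLinearMap.proj k : Cn n →L[ℂ] ℂ).restrictScalars ℝ := by
  have h : (fun w : Cn n => ∑ k, c k * w k)
      = ⇑((∑ k, c k • ContinuousLinearMap.proj k : Cn n →L[ℂ] ℂ).restrictScalars ℝ) := by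
    ext w
    simp
  rw [h, ContinuousLinearMap.fderiv]

theorem fderiv_sum_mul_conj :
    fderiv ℝ (fun w : Cn n => ∑ k, c k * starRingEnd ℂ (w k)) z
      = Complex.conjCLE.toContinuousLinearMap.comp
          (fderiv ℝ (fun w : Cn n => ∑ k, starRingEnd ℂ (c k) * w k) z) := by
  rw [← Complex.conjCLE.comp_fderiv]
  congr 1
  ext w
  simp

theorem fderiv_sum_mul_single (v : ℂ) :
    fderiv ℝ (fun w : Cn n => ∑ k, c k * w k) z (Pi.single r v) = c r * v := by
  simp [fderiv_sum_mul, Pi.single_apply]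

theorem fderiv_sum_mul_conj_single (v : ℂ) :
    fderiv ℝ (fun w : Cn n => ∑ k, c k * starRingEnd ℂ (w k)) z (Pi.single r v)
      = c r * starRingEnd ℂ v := by
  simp [fderiv_sum_mul_conj, fderiv_sum_mul, Pi.single_apply]

theorem wirt_sum_mul : wirt (fun w => ∑ k, c k * w k) z r = c r := by
  simp only [wirt, fderiv_sum_mul_single]
  linear_combination (-(c r) / 2) * Complex.I_sq

theorem wirt_sum_mul_conj : wirt (fun w => ∑ k, c k * starRingEnd ℂ (w k)) z r = 0 := by
  simp only [wirt, fderiv_sum_mul_conj_single, map_one, Complex.conj_I]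
  linear_combination (c r / 2) * Complex.I_sq

theorem wirtBar_sum_mul_conj : wirtBar (fun w => ∑ k, c k * starRingEnd ℂ (w k)) z r = c r := by
  simp only [wirtBar, fderiv_sum_mul_conj_single, map_one, Complex.conj_I]
  linear_combination (-(c r) / 2) * Complex.I_sq

end Wirtinger

section Bivectors

open Finset

variable {n : ℕ} (s : Fin n → Fin n → Fin n → ℝ)

noncomputable def linearBivector (z : Cn n) (i j : Fin n) : ℂ := ∑ k, (s i j k : ℂ) * z k

noncomputable def conjBivector (z : Cn n) (i j : Fin n) : ℂ :=
  linearBivector s (fun k => starRingEnd ℂ (z k)) i j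

theorem wirt_linearBivector (j k : Fin n) (z : Cn n) (r : Fin n) :
    wirt (fun w => linearBivector s w j k) z r = s j k r :=
  wirt_sum_mul _ z r

theorem wirt_conjBivector (j k : Fin n) (z : Cn n) (r : Fin n) :
    wirt (fun w => conjBivector s w j k) z r = 0 :=
  wirt_sum_mul_conj _ z r

theorem wirtBar_conjBivector (j k : Fin n) (z : Cn n) (r : Fin n) :
    wirtBar (fun w => conjBivector s w j k) z r = s j k r :=
  wirtBar_sum_mul_conj _ z r

theorem conj_linearBivector (z : Cn n) (i j : Fin n) :
    starRingEnd ℂ (linearBivector s z i j) = conjBivector s z i j := by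
  simp [linearBivector, conjBivector]

theorem linearBivector_swap (hanti : ∀ i j k, s j i k = -s i j k) (z : Cn n) (i j : Fin n) :
    linearBivector s z j i = -linearBivector s z i j := by
  simp only [linearBivector, ← sum_neg_distrib, hanti i j, Complex.ofReal_neg, neg_mul]

theorem schoutenHol_conjBivector (z : Cn n) (i j k : Fin n) :
    schoutenHol (conjBivector s) (conjBivector s) z i j k = 0 := by
  simp [schoutenHol, wirt_conjBivector]

variable (hjac : ∀ i j k m, ∑ r, (s j k r * s i r m + s k i r * s j r m + s i j r * s k r m) = 0)
include hjac

theorem sum_linearBivector_mul_cyclic (z : Cn n) (i j k : Fin n) :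
    ∑ r, linearBivector s z i r * s j k r + ∑ r, linearBivector s z j r * s k i r
      + ∑ r, linearBivector s z k r * s i j r = 0 := by
  have contract : ∀ a b c, ∑ r, linearBivector s z a r * s b c r
      = ∑ m, ((∑ r, s b c r * s a r m : ℝ) : ℂ) * z m := by
    intro a b c
    simp only [linearBivector, sum_mul, Complex.ofReal_sum, Complex.ofReal_mul]
    rw [sum_comm]
    exact sum_congr rfl fun m _ => sum_congr rfl fun r _ => by ring
  rw [contract, contract, contract, ← sum_add_distrib, ← sum_add_distrib]
  refine sum_eq_zero fun m _ => ?_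
  rw [← add_mul, ← add_mul, ← Complex.ofReal_add, ← Complex.ofReal_add, ← sum_add_distrib,
    ← sum_add_distrib, hjac, Complex.ofReal_zero, zero_mul]

theorem sum_conjBivector_mul_cyclic (z : Cn n) (i j k : Fin n) :
    ∑ r, conjBivector s z i r * s j k r + ∑ r, conjBivector s z j r * s k i r
      + ∑ r, conjBivector s z k r * s i j r = 0 :=
  sum_linearBivector_mul_cyclic s hjac _ i j k

theorem schoutenHol_linearBivector (z : Cn n) (i j k : Fin n) :
    schoutenHol (linearBivector s) (linearBivector s) z i j k = 0 := by
  simp only [schoutenHol, wirt_linearBivector, ← two_mul, ← mul_sum]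
  linear_combination sum_linearBivector_mul_cyclic s hjac z i j k

theorem schoutenHol_linearBivector_conjBivector (z : Cn n) (i j k : Fin n) :
    schoutenHol (linearBivector s) (conjBivector s) z i j k = 0 := by
  simp only [schoutenHol, wirt_linearBivector, wirt_conjBivector, mul_zero, zero_add]
  linear_combination (1 / 2 : ℂ) * sum_conjBivector_mul_cyclic s hjac z i j k

theorem conjBivector_coadjoint_invariant (hanti : ∀ i j k, s j i k = -s i j k)
    (i₀ : Fin n) (z : Cn n) (j k : Fin n) :
    (∑ r, (linearBivector s z i₀ r * wirt (fun w => conjBivector s w j k) z r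
        + starRingEnd ℂ (linearBivector s z i₀ r) * wirtBar (fun w => conjBivector s w j k) z r))
      - ∑ r, conjBivector s z r k * wirt (fun w => linearBivector s w i₀ j) z r
      - ∑ r, conjBivector s z j r * wirt (fun w => linearBivector s w i₀ k) z r = 0 := by
  simp only [wirt_conjBivector, wirtBar_conjBivector, wirt_linearBivector, conj_linearBivector,
    mul_zero, zero_add]
  have swap_left : ∑ r, conjBivector s z r k * s i₀ j r
      = -∑ r, conjBivector s z k r * s i₀ j r := by
    simp only [conjBivector, linearBivector_swap s hanti _ k, neg_mul, sum_neg_distrib]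
  have swap_right : ∑ r, conjBivector s z j r * (s i₀ k r : ℂ)
      = -∑ r, conjBivector s z j r * s k i₀ r := by
    simp only [hanti k i₀, Complex.ofReal_neg, mul_neg, sum_neg_distrib]
  rw [swap_left, swap_right]
  linear_combination sum_conjBivector_mul_cyclic s hjac z i₀ j k

end Bivectors

/-- on 𝔤* (𝔤 = complexification of the real Lie algebra 𝔤₀ with
basis e and structure constants s), the canonical complex bivector fields
c^{ij}(z) = Σ_k s_{ij}^k z_k and c̃^{ij}(z) = Σ_k s_{ij}^k z̄_k form a complex
Poisson pair: [c,c] = [c,c̃] = [c̃,c̃] = 0; moreover c̃ is invariant under the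
coadjoint G₀-action, i.e. its Lie derivative along each generator
ρ(e_{i₀}) = c(z_{i₀}) + conj(c(z_{i₀})) vanishes. -/
theorem stmt14 (n : ℕ) (L : Type*) [LieRing L] [LieAlgebra ℝ L]
    (e : Basis (Fin n) ℝ L)
    (s : Fin n → Fin n → Fin n → ℝ)
    (hs : ∀ i j k, s i j k = e.repr ⁅e i, e j⁆ k)
    (cbiv ctbiv : Cn n → Fin n → Fin n → ℂ)
    (hcbiv : ∀ z i j, cbiv z i j = ∑ k, (s i j k : ℂ) * z k)
    (hct : ∀ z i j, ctbiv z i j = ∑ k, (s i j k : ℂ) * (starRingEnd ℂ) (z k)) :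
    (∀ z i j k, schoutenHol cbiv cbiv z i j k = 0) ∧
    (∀ z i j k, schoutenHol cbiv ctbiv z i j k = 0) ∧
    (∀ z i j k, schoutenHol ctbiv ctbiv z i j k = 0) ∧
    (∀ (i₀ : Fin n) (z : Cn n) (j k : Fin n),
      (∑ r, (cbiv z i₀ r * wirt (fun w => ctbiv w j k) z r
              + (starRingEnd ℂ) (cbiv z i₀ r) * wirtBar (fun w => ctbiv w j k) z r))
        - (∑ r, ctbiv z r k * wirt (fun w => cbiv w i₀ j) z r)
        - (∑ r, ctbiv z j r * wirt (fun w => cbiv w i₀ k) z r) = 0) := by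
  obtain rfl : s = fun i j k => e.repr ⁅e i, e j⁆ k := funext₃ hs
  obtain rfl : cbiv = linearBivector _ := funext₃ hcbiv
  obtain rfl : ctbiv = conjBivector _ := funext₃ hct
  have hjac := e.sum_repr_lie_jacobi
  exact ⟨schoutenHol_linearBivector _ hjac, schoutenHol_linearBivector_conjBivector _ hjac,
    schoutenHol_conjBivector _, conjBivector_coadjoint_invariant _ hjac e.repr_lie_self_swap⟩
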